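/- arXiv:1804.07642 — 4 statements merged into one kernel-verified Lean document; each statement's English description precedes it below -/
import Mathlib

section
/- Let a ∈ (0,1], let K ≥ 1 be an integer, and define g : (K−1, ∞) → ℝ by g(r) = ∑_{j=0}^{K−1} 1/min(1, (r−j)·a). Let M ≥ 1, let p₁ > p₂ > ⋯ > p_M > 0 be strictly decreasing positive reals, and let S ≥ M·K. Then the minimum of G(r) = ∑_{m=1}^M p_m · g(r_m) over the compact set { r ∈ ℝ^M : K ≤ r_m ≤ a⁻¹ + K for all m, ∑_{m=1}^M r_m ≤ S } is attained, and it is attained at some r̂ that is non-increasing: i ≤ j implies r̂_i ≥ r̂_j. -/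
/-!
The objective is continuous on the compact feasible set, so a minimiser exists. Each
`g = mdsDelay a K` is decreasing in the number of cached subpackets while the popularities
decrease in the index, so by the rearrangement inequality sorting the minimiser into
non-increasing order keeps the objective minimal; sorting does not change the constraints.
-/

open Finset Set OrderDual

noncomputable def mdsDelay (a : ℝ) (K : ℕ) (r : ℝ) : ℝ :=
  ∑ j ∈ range K, 1 / min 1 ((r - j) * a)

section mdsDelay

variable {a : ℝ} {K : ℕ}

lemma min_one_sub_mul_pos (ha : 0 < a) {r : ℝ} (hr : r ∈ Ioi ((K : ℝ) - 1)) {j : ℕ}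
    (hj : j ∈ range K) : 0 < min 1 ((r - j) * a) := by
  have hjK : (j : ℝ) + 1 ≤ K := by exact_mod_cast mem_range.mp hj
  exact lt_min one_pos (mul_pos (by linarith [mem_Ioi.mp hr]) ha)

lemma antitoneOn_mdsDelay (ha : 0 < a) : AntitoneOn (mdsDelay a K) (Ioi ((K : ℝ) - 1)) :=
  fun _ hr _ _ hrs => sum_le_sum fun j hj =>
    one_div_le_one_div_of_le (min_one_sub_mul_pos ha hr hj)
      (min_le_min_left 1 (mul_le_mul_of_nonneg_right (sub_le_sub_right hrs j) ha.le))

lemma continuousOn_mdsDelay (ha : 0 < a) : ContinuousOn (mdsDelay a K) (Ioi ((K : ℝ) - 1)) :=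
  continuousOn_finsetSum _ fun _ hj =>
    continuousOn_const.div (by fun_prop) fun _ hr => (min_one_sub_mul_pos ha hr hj).ne'

end mdsDelay

lemma isCompact_box_inter_sum_le {ι : Type*} [Fintype ι] (lo hi S : ℝ) :
    IsCompact {r : ι → ℝ | (∀ m, lo ≤ r m ∧ r m ≤ hi) ∧ ∑ m, r m ≤ S} := by
  refine (isCompact_univ_pi fun _ => isCompact_Icc).of_isClosed_subset ?_
    fun r hr m _ => hr.1 m
  rw [ofPred_and, ofPred_forall]
  exact (isClosed_iInter fun m => (isClosed_le continuous_const (continuous_apply m)).inter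
      (isClosed_le (continuous_apply m) continuous_const)).inter
    (isClosed_le (continuous_finsetSum _ fun m _ => continuous_apply m) continuous_const)

lemma exists_perm_antitone_sum_mul_le {α : Type*} [LinearOrder α] {n : ℕ} {p : Fin n → ℝ}
    (hp : Antitone p) {f : α → ℝ} {s : Set α} (hf : AntitoneOn f s) {r : Fin n → α}
    (hr : ∀ m, r m ∈ s) :
    ∃ σ : Equiv.Perm (Fin n), Antitone (r ∘ σ) ∧
      ∑ m, p m * f (r (σ m)) ≤ ∑ m, p m * f (r m) := by
  set σ := Tuple.sort (toDual ∘ r)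
  have hsorted : Antitone (r ∘ σ) := monotone_toDual_comp_iff.mp (Tuple.monotone_sort _)
  have hcost : Monotone (f ∘ r ∘ σ) := fun i j hij => hf (hr _) (hr _) (hsorted hij)
  refine ⟨σ, hsorted, ?_⟩
  simpa using (hp.antivary hcost).sum_mul_le_sum_mul_comp_perm (σ := σ⁻¹)

theorem mds_optimal_allocation_exists_nonincreasing_general
    (a : ℝ) (ha0 : 0 < a) (K : ℕ)
    (M : ℕ) (p : Fin M → ℝ) (hdec : StrictAnti p)
    (S : ℝ) (hS : (M : ℝ) * K ≤ S) :
    ∃ rhat : Fin M → ℝ,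
      (∀ m, (K : ℝ) ≤ rhat m ∧ rhat m ≤ a⁻¹ + K) ∧ (∑ m, rhat m ≤ S) ∧
      (∀ r : Fin M → ℝ, (∀ m, (K : ℝ) ≤ r m ∧ r m ≤ a⁻¹ + K) → ∑ m, r m ≤ S →
        ∑ m, p m * (∑ j ∈ Finset.range K, 1 / min 1 ((rhat m - j) * a)) ≤
          ∑ m, p m * (∑ j ∈ Finset.range K, 1 / min 1 ((r m - j) * a))) ∧
      (∀ i j : Fin M, i ≤ j → rhat j ≤ rhat i) := by
  set C := {r : Fin M → ℝ | (∀ m, (K : ℝ) ≤ r m ∧ r m ≤ a⁻¹ + K) ∧ ∑ m, r m ≤ S}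
  have hC_nonempty : C.Nonempty :=
    ⟨fun _ => K, fun _ => ⟨le_rfl, le_add_of_nonneg_left (inv_pos.mpr ha0).le⟩,
      by simpa [mul_comm] using hS⟩
  have hC_domain : ∀ r ∈ C, ∀ m, r m ∈ Ioi ((K : ℝ) - 1) :=
    fun r hr m => mem_Ioi.mpr (by linarith [(hr.1 m).1])
  have hcont : ContinuousOn (fun r : Fin M → ℝ => ∑ m, p m * mdsDelay a K (r m)) C :=
    continuousOn_finsetSum _ fun m _ => continuousOn_const.mul <|
      (continuousOn_mdsDelay ha0).comp (continuous_apply m).continuousOn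
        fun r hr => hC_domain r hr m
  obtain ⟨r₀, hr₀C, hr₀min⟩ :=
    (isCompact_box_inter_sum_le _ _ S).exists_isMinOn hC_nonempty hcont
  obtain ⟨σ, hsorted, hsorted_le⟩ := exists_perm_antitone_sum_mul_le hdec.antitone
    (antitoneOn_mdsDelay ha0) (hC_domain r₀ hr₀C)
  refine ⟨r₀ ∘ σ, fun m => hr₀C.1 (σ m), (Equiv.sum_comp σ r₀).trans_le hr₀C.2,
    fun r hr hrS => hsorted_le.trans (hr₀min ⟨hr, hrS⟩), fun i j hij => hsorted hij⟩

/-- Lemma 3 (exact form): the minimum of the MDS-coded delay objective over the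
compact feasible set is attained, at some non-increasing allocation. -/
theorem mds_optimal_allocation_exists_nonincreasing
    (a : ℝ) (ha0 : 0 < a) (ha1 : a ≤ 1) (K : ℕ) (hK : 1 ≤ K)
    (M : ℕ) (hM : 1 ≤ M) (p : Fin M → ℝ) (hp : ∀ m, 0 < p m) (hdec : StrictAnti p)
    (S : ℝ) (hS : (M : ℝ) * K ≤ S) :
    ∃ rhat : Fin M → ℝ,
      (∀ m, (K : ℝ) ≤ rhat m ∧ rhat m ≤ a⁻¹ + K) ∧ (∑ m, rhat m ≤ S) ∧
      (∀ r : Fin M → ℝ, (∀ m, (K : ℝ) ≤ r m ∧ r m ≤ a⁻¹ + K) → ∑ m, r m ≤ S →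
        ∑ m, p m * (∑ j ∈ Finset.range K, 1 / min 1 ((rhat m - j) * a)) ≤
          ∑ m, p m * (∑ j ∈ Finset.range K, 1 / min 1 ((r m - j) * a))) ∧
      (∀ i j : Fin M, i ≤ j → rhat j ≤ rhat i) :=
  mds_optimal_allocation_exists_nonincreasing_general a ha0 K M p hdec S hS
end

section
/- Let p₁ > p₂ > ⋯ > p_M > 0 be strictly decreasing positive reals, B > 0, and S > 0 with S ≤ M·B. Suppose m₁ ∈ {1, …, M} is such that, setting S′ = S − (m₁−1)·B and t = S′ / ∑_{j=m₁}^M √p_j, one has S′ > 0, t·√p_{m₁} ≤ B, and (m₁ = 1 or t·√p_{m₁−1} ≥ B). Define x̂_m = B for m < m₁ and x̂_m = t·√p_m for m ≥ m₁. Then x̂ is feasible and minimizes ∑_{m=1}^M p_m / x_m over { x ∈ ℝ^M : 0 < x_m ≤ B for all m, ∑_{m=1}^M x_m ≤ S }. -/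
/-!
With `λ = 1 / t²`, the allocation `x̂` satisfies the KKT conditions of the convex problem:
`p_m / x̂_m² = λ` on the water-filled part `m ≥ m₁`, while on the capped part `m < m₁` the
threshold condition gives `p_m / B² ≥ λ` and any feasible `x` has `x_m ≤ B`. Adding the
tangent-line bounds `p / x ≥ p / a + (p / a²) (a - x)` of the convex map `x ↦ p / x` then
leaves `∑ p_m / x_m ≥ ∑ p_m / x̂_m + λ (∑ x̂_m - ∑ x_m)`, and `∑ x̂_m = S ≥ ∑ x_m`.
-/

open Finset

lemma div_add_div_sq_mul_sub_le_div {p a x : ℝ} (hp : 0 ≤ p) (ha : 0 < a) (hx : 0 < x) :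
    p / a + p / a ^ 2 * (a - x) ≤ p / x := by
  have hgap : p / x - (p / a + p / a ^ 2 * (a - x)) = p * (a - x) ^ 2 / (a ^ 2 * x) := by
    field_simp
    ring
  have : 0 ≤ p * (a - x) ^ 2 / (a ^ 2 * x) := by positivity
  linarith

/-- Sufficiency of the KKT conditions for minimizing `∑ p_i / x_i` under `∑ x_i ≤ ∑ a_i`,
`c` being the multiplier of the budget constraint. -/
theorem sum_div_le_sum_div_of_kkt {ι : Type*} (s : Finset ι) {p a x : ι → ℝ} {c : ℝ}
    (hc : 0 ≤ c) (hp : ∀ i ∈ s, 0 ≤ p i) (ha : ∀ i ∈ s, 0 < a i) (hx : ∀ i ∈ s, 0 < x i)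
    (hkkt : ∀ i ∈ s, c * (a i - x i) ≤ p i / a i ^ 2 * (a i - x i))
    (hsum : ∑ i ∈ s, x i ≤ ∑ i ∈ s, a i) :
    ∑ i ∈ s, p i / a i ≤ ∑ i ∈ s, p i / x i := by
  have hpoint : ∀ i ∈ s, p i / a i + c * (a i - x i) ≤ p i / x i := fun i hi =>
    (add_le_add_right (hkkt i hi) _).trans
      (div_add_div_sq_mul_sub_le_div (hp i hi) (ha i hi) (hx i hi))
  have hbudget : 0 ≤ c * ∑ i ∈ s, (a i - x i) := by
    rw [sum_sub_distrib]
    exact mul_nonneg hc (sub_nonneg.mpr hsum)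
  calc ∑ i ∈ s, p i / a i ≤ ∑ i ∈ s, p i / a i + c * ∑ i ∈ s, (a i - x i) :=
        le_add_of_nonneg_right hbudget
    _ = ∑ i ∈ s, (p i / a i + c * (a i - x i)) := by rw [mul_sum, sum_add_distrib]
    _ ≤ ∑ i ∈ s, p i / x i := sum_le_sum hpoint

lemma one_div_sq_le_div_sq_of_le_mul_sqrt {p t B : ℝ} (hB : 0 < B) (h : B ≤ t * √p) :
    1 / t ^ 2 ≤ p / B ^ 2 := by
  have hp : 0 ≤ p := by
    by_contra! hneg
    rw [Real.sqrt_eq_zero_of_nonpos hneg.le, mul_zero] at h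
    linarith
  have hsq : B ^ 2 ≤ t ^ 2 * p := by
    calc B ^ 2 ≤ (t * √p) ^ 2 := pow_le_pow_left₀ hB.le h 2
      _ = t ^ 2 * p := by rw [mul_pow, Real.sq_sqrt hp]
  have ht : t ≠ 0 := by
    rintro rfl
    linarith
  rw [div_le_div_iff₀ (by positivity) (by positivity)]
  linarith

lemma div_mul_sqrt_sq {p : ℝ} (hp : 0 < p) (t : ℝ) : p / (t * √p) ^ 2 = 1 / t ^ 2 := by
  rw [mul_pow, Real.sq_sqrt hp.le]
  field_simp

lemma sum_Icc_eq_sum_Ico_add_sum_Icc {β : Type*} [AddCommMonoid β] (f : ℕ → β) {a b c : ℕ}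
    (hab : a ≤ b) (hbc : b ≤ c + 1) :
    ∑ m ∈ Icc a c, f m = ∑ m ∈ Ico a b, f m + ∑ m ∈ Icc b c, f m := by
  rw [← Ico_add_one_right_eq_Icc, ← Ico_add_one_right_eq_Icc, sum_Ico_consecutive f hab hbc]

section TwoPart

variable {M m₁ : ℕ} {p xhat : ℕ → ℝ} {B t : ℝ}

lemma two_part_pos_and_le_cap (hp : ∀ m, 1 ≤ m → m ≤ M → 0 < p m)
    (hanti : AntitoneOn p (Set.Icc 1 M)) (hB : 0 < B) (ht : 0 < t) (hm₁ : 1 ≤ m₁)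
    (hcap : t * √(p m₁) ≤ B)
    (hxhat : ∀ m, 1 ≤ m → m ≤ M → xhat m = if m < m₁ then B else t * √(p m))
    {m : ℕ} (h1 : 1 ≤ m) (hM : m ≤ M) :
    0 < xhat m ∧ xhat m ≤ B := by
  rw [hxhat m h1 hM]
  split_ifs with hlt
  · exact ⟨hB, le_rfl⟩
  · refine ⟨mul_pos ht (Real.sqrt_pos.mpr (hp m h1 hM)), hcap.trans' ?_⟩
    have hpm : p m ≤ p m₁ := hanti ⟨hm₁, by omega⟩ ⟨h1, hM⟩ (not_lt.mp hlt)
    gcongr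

lemma two_part_sum (hm₁ : 1 ≤ m₁) (hm₁M : m₁ ≤ M)
    (hxhat : ∀ m, 1 ≤ m → m ≤ M → xhat m = if m < m₁ then B else t * √(p m)) :
    ∑ m ∈ Icc 1 M, xhat m = ((m₁ - 1 : ℕ) : ℝ) * B + t * ∑ m ∈ Icc m₁ M, √(p m) := by
  have hcapped : ∑ m ∈ Ico 1 m₁, xhat m = ∑ m ∈ Ico 1 m₁, B :=
    sum_congr rfl fun m hm => by
      rw [mem_Ico] at hm
      rw [hxhat m hm.1 (by omega), if_pos hm.2]
  have hfilled : ∑ m ∈ Icc m₁ M, xhat m = ∑ m ∈ Icc m₁ M, t * √(p m) :=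
    sum_congr rfl fun m hm => by
      rw [mem_Icc] at hm
      rw [hxhat m (by omega) hm.2, if_neg (not_lt.mpr hm.1)]
  rw [sum_Icc_eq_sum_Ico_add_sum_Icc _ hm₁ (by omega), hcapped, hfilled, sum_const,
    Nat.card_Ico, nsmul_eq_mul, mul_sum]

lemma two_part_kkt (hp : ∀ m, 1 ≤ m → m ≤ M → 0 < p m)
    (hanti : AntitoneOn p (Set.Icc 1 M)) (hB : 0 < B) (ht : 0 < t) (hm₁M : m₁ ≤ M)
    (hlow : m₁ = 1 ∨ B ≤ t * √(p (m₁ - 1)))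
    (hxhat : ∀ m, 1 ≤ m → m ≤ M → xhat m = if m < m₁ then B else t * √(p m))
    {x : ℕ → ℝ} {m : ℕ} (h1 : 1 ≤ m) (hM : m ≤ M) (hxB : x m ≤ B) :
    1 / t ^ 2 * (xhat m - x m) ≤ p m / xhat m ^ 2 * (xhat m - x m) := by
  rw [hxhat m h1 hM]
  split_ifs with hlt
  · have hthreshold : B ≤ t * √(p m) := by
      obtain hm₁ | hm₁ := hlow
      · omega
      have hpm : p (m₁ - 1) ≤ p m := hanti ⟨h1, hM⟩ ⟨by omega, by omega⟩ (by omega)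
      exact hm₁.trans (by gcongr)
    exact mul_le_mul_of_nonneg_right (one_div_sq_le_div_sq_of_le_mul_sqrt hB hthreshold)
      (sub_nonneg.mpr hxB)
  · rw [div_mul_sqrt_sq (hp m h1 hM)]

end TwoPart

theorem two_part_waterfilling_optimal_general (M : ℕ)
    (p : ℕ → ℝ) (hp : ∀ m, 1 ≤ m → m ≤ M → 0 < p m)
    (hdec : ∀ i j, 1 ≤ i → i < j → j ≤ M → p j < p i)
    (B S : ℝ) (hB : 0 < B)
    (m₁ : ℕ) (hm₁l : 1 ≤ m₁) (hm₁u : m₁ ≤ M)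
    (S' t : ℝ)
    (hS'def : S' = S - ((m₁ - 1 : ℕ) : ℝ) * B)
    (htdef : t = S' / ∑ j ∈ Finset.Icc m₁ M, Real.sqrt (p j))
    (hS'pos : 0 < S')
    (hcap : t * Real.sqrt (p m₁) ≤ B)
    (hlow : m₁ = 1 ∨ B ≤ t * Real.sqrt (p (m₁ - 1)))
    (xhat : ℕ → ℝ)
    (hxhat : ∀ m, 1 ≤ m → m ≤ M →
      xhat m = if m < m₁ then B else t * Real.sqrt (p m)) :
    ((∀ m, 1 ≤ m → m ≤ M → 0 < xhat m ∧ xhat m ≤ B) ∧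
      ∑ m ∈ Finset.Icc 1 M, xhat m ≤ S) ∧
    ∀ x : ℕ → ℝ, (∀ m, 1 ≤ m → m ≤ M → 0 < x m ∧ x m ≤ B) →
      ∑ m ∈ Finset.Icc 1 M, x m ≤ S →
      ∑ m ∈ Finset.Icc 1 M, p m / xhat m ≤ ∑ m ∈ Finset.Icc 1 M, p m / x m := by
  have hanti : AntitoneOn p (Set.Icc 1 M) :=
    StrictAntiOn.antitoneOn fun i hi j hj hij => hdec i j hi.1 hij hj.2
  have hroots : 0 < ∑ j ∈ Icc m₁ M, √(p j) :=
    sum_pos' (fun j _ => Real.sqrt_nonneg _)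
      ⟨m₁, mem_Icc.mpr ⟨le_rfl, hm₁u⟩, Real.sqrt_pos.mpr (hp m₁ hm₁l hm₁u)⟩
  have ht : 0 < t := htdef ▸ div_pos hS'pos hroots
  have hfeas := fun m => two_part_pos_and_le_cap hp hanti hB ht hm₁l hcap hxhat (m := m)
  have hsum : ∑ m ∈ Icc 1 M, xhat m = S := by
    rw [two_part_sum hm₁l hm₁u hxhat, htdef, div_mul_cancel₀ _ hroots.ne', hS'def]
    ring
  refine ⟨⟨hfeas, hsum.le⟩, fun x hx hxS => ?_⟩
  refine sum_div_le_sum_div_of_kkt _ (c := 1 / t ^ 2) (by positivity)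
    (fun m hm => (hp m (mem_Icc.mp hm).1 (mem_Icc.mp hm).2).le)
    (fun m hm => (hfeas m (mem_Icc.mp hm).1 (mem_Icc.mp hm).2).1)
    (fun m hm => (hx m (mem_Icc.mp hm).1 (mem_Icc.mp hm).2).1)
    (fun m hm => ?_) (hxS.trans hsum.ge)
  obtain ⟨h1, hM⟩ := mem_Icc.mp hm
  exact two_part_kkt hp hanti hB ht hm₁u hlow hxhat h1 hM (hx m h1 hM).2

/-- Proposition 1 (exact form): the two-part (capped water-filling) allocation
`x̂_m = B` for `m < m₁` and `x̂_m = t √p_m` for `m ≥ m₁` is feasible and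
minimizes `∑ p_m / x_m` over `{0 < x_m ≤ B, ∑ x_m ≤ S}`. -/
theorem two_part_waterfilling_optimal (M : ℕ) (hM : 1 ≤ M)
    (p : ℕ → ℝ) (hp : ∀ m, 1 ≤ m → m ≤ M → 0 < p m)
    (hdec : ∀ i j, 1 ≤ i → i < j → j ≤ M → p j < p i)
    (B S : ℝ) (hB : 0 < B) (hS : 0 < S) (hSMB : S ≤ M * B)
    (m₁ : ℕ) (hm₁l : 1 ≤ m₁) (hm₁u : m₁ ≤ M)
    (S' t : ℝ)
    (hS'def : S' = S - ((m₁ - 1 : ℕ) : ℝ) * B)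
    (htdef : t = S' / ∑ j ∈ Finset.Icc m₁ M, Real.sqrt (p j))
    (hS'pos : 0 < S')
    (hcap : t * Real.sqrt (p m₁) ≤ B)
    (hlow : m₁ = 1 ∨ B ≤ t * Real.sqrt (p (m₁ - 1)))
    (xhat : ℕ → ℝ)
    (hxhat : ∀ m, 1 ≤ m → m ≤ M →
      xhat m = if m < m₁ then B else t * Real.sqrt (p m)) :
    ((∀ m, 1 ≤ m → m ≤ M → 0 < xhat m ∧ xhat m ≤ B) ∧
      ∑ m ∈ Finset.Icc 1 M, xhat m ≤ S) ∧
    ∀ x : ℕ → ℝ, (∀ m, 1 ≤ m → m ≤ M → 0 < x m ∧ x m ≤ B) →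
      ∑ m ∈ Finset.Icc 1 M, x m ≤ S →
      ∑ m ∈ Finset.Icc 1 M, p m / xhat m ≤ ∑ m ∈ Finset.Icc 1 M, p m / x m :=
  two_part_waterfilling_optimal_general M p hp hdec B S hB m₁ hm₁l hm₁u S' t hS'def htdef hS'pos
    hcap hlow xhat hxhat
end

section
/- Let p₁ > p₂ > ⋯ > p_M > 0 be strictly decreasing positive reals and 0 < K < B reals with M·K ≤ S ≤ M·B. Suppose indices 1 ≤ m₁ ≤ m₂ ≤ M+1 with m₁ < m₂ are such that, setting S′ = S − (m₁−1)·B − (M − m₂ + 1)·K and t = S′/∑_{j=m₁}^{m₂−1} √p_j, one has S′ > 0, t·√p_{m₁} ≤ B, (m₁ = 1 or t·√p_{m₁−1} ≥ B), t·√p_{m₂−1} ≥ K, and (m₂ = M+1 or t·√p_{m₂} ≤ K). Define r̂_m = B for m < m₁, r̂_m = t·√p_m for m₁ ≤ m < m₂, and r̂_m = K for m ≥ m₂. Then r̂ is feasible and minimizes ∑_{m=1}^M p_m / r_m over { r ∈ ℝ^M : K ≤ r_m ≤ B for all m, ∑_{m=1}^M r_m ≤ S }. -/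
/-!
The allocation is a KKT point of the convex problem with multiplier `λ = 1 / t²` on the budget
constraint. By convexity of `r ↦ p / r`, `p / r̂ ≤ p / r + (p / r̂²) (r - r̂)`, and the threshold
conditions say exactly that `(t √p - r̂) (r - r̂) ≤ 0` for every feasible `r`, which lets us
replace the slope `p / r̂²` by `λ`. Summing, and using that `r̂` exhausts the budget,
`∑ p / r̂ ≤ ∑ p / r + λ (∑ r - S) ≤ ∑ p / r`.
-/

open Finset

lemma div_le_div_add_div_sq_mul_sub {p a r : ℝ} (hp : 0 ≤ p) (ha : 0 < a) (hr : 0 < r) :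
    p / a ≤ p / r + p / a ^ 2 * (r - a) := by
  have key : p / r + p / a ^ 2 * (r - a) - p / a = p * (r - a) ^ 2 / (r * a ^ 2) := by
    field_simp
    ring
  have : 0 ≤ p * (r - a) ^ 2 / (r * a ^ 2) := by positivity
  linarith

lemma div_sq_mul_sub_le_of_mul_sub_nonpos {p t a r : ℝ} (hp : 0 ≤ p) (ht : 0 < t) (ha : 0 < a)
    (h : (t * √p - a) * (r - a) ≤ 0) : p / a ^ 2 * (r - a) ≤ (t ^ 2)⁻¹ * (r - a) := by
  obtain ⟨q, hq, rfl⟩ : ∃ q, 0 ≤ q ∧ p = q ^ 2 := ⟨√p, Real.sqrt_nonneg p, (Real.sq_sqrt hp).symm⟩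
  rw [Real.sqrt_sq hq] at h
  have key : q ^ 2 / a ^ 2 * (r - a) - (t ^ 2)⁻¹ * (r - a)
      = (t * q - a) * (r - a) * ((t * q + a) / (a ^ 2 * t ^ 2)) := by
    field_simp
    ring
  have : (t * q - a) * (r - a) * ((t * q + a) / (a ^ 2 * t ^ 2)) ≤ 0 :=
    mul_nonpos_of_nonpos_of_nonneg h (by positivity)
  linarith

lemma div_le_div_add_inv_sq_mul_sub {p t a r : ℝ} (hp : 0 ≤ p) (ht : 0 < t) (ha : 0 < a)
    (hr : 0 < r) (h : (t * √p - a) * (r - a) ≤ 0) : p / a ≤ p / r + (t ^ 2)⁻¹ * (r - a) :=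
  (div_le_div_add_div_sq_mul_sub hp ha hr).trans
    (add_le_add_right (div_sq_mul_sub_le_of_mul_sub_nonpos hp ht ha h) _)

theorem Finset.sum_le_sum_of_le_add_mul_sub {ι : Type*} {s : Finset ι} {f g a r : ι → ℝ} {c : ℝ}
    (hc : 0 ≤ c) (h : ∀ i ∈ s, f i ≤ g i + c * (r i - a i)) (hra : ∑ i ∈ s, r i ≤ ∑ i ∈ s, a i) :
    ∑ i ∈ s, f i ≤ ∑ i ∈ s, g i :=
  calc ∑ i ∈ s, f i ≤ ∑ i ∈ s, (g i + c * (r i - a i)) := sum_le_sum h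
    _ = ∑ i ∈ s, g i + c * (∑ i ∈ s, r i - ∑ i ∈ s, a i) := by
      rw [sum_add_distrib, ← mul_sum, sum_sub_distrib]
    _ ≤ ∑ i ∈ s, g i := by nlinarith

def threePart (B K : ℝ) (m₁ m₂ : ℕ) (x : ℕ → ℝ) (m : ℕ) : ℝ :=
  if m < m₁ then B else if m < m₂ then x m else K

section threePart

variable {B K : ℝ} {m₁ m₂ M : ℕ} {x : ℕ → ℝ}

lemma threePart_mem_Icc (hx : AntitoneOn x (Set.Icc 1 M)) (hKB : K ≤ B) (hm₁ : 1 ≤ m₁)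
    (hm₂ : m₂ ≤ M + 1) (hB : x m₁ ≤ B) (hK : K ≤ x (m₂ - 1)) {m : ℕ} (hm : m ∈ Set.Icc 1 M) :
    threePart B K m₁ m₂ x m ∈ Set.Icc K B := by
  obtain ⟨hm1, hmM⟩ := hm
  unfold threePart
  split_ifs with h₁ h₂
  · exact ⟨hKB, le_rfl⟩
  · exact ⟨hK.trans (hx ⟨hm1, hmM⟩ ⟨by omega, by omega⟩ (by omega)),
      (hx ⟨hm₁, by omega⟩ ⟨hm1, hmM⟩ (by omega)).trans hB⟩
  · exact ⟨le_rfl, hKB⟩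

lemma sum_Ico_eq_mul_of_forall_eq {c : ℝ} {a b : ℕ} {f : ℕ → ℝ} (h : ∀ m ∈ Ico a b, f m = c) :
    ∑ m ∈ Ico a b, f m = ((b - a : ℕ) : ℝ) * c := by
  rw [sum_congr rfl h, sum_const, Nat.card_Ico, nsmul_eq_mul]

lemma sum_Icc_threePart (hm₁ : 1 ≤ m₁) (hm₁₂ : m₁ ≤ m₂) (hm₂ : m₂ ≤ M + 1) :
    ∑ m ∈ Icc 1 M, threePart B K m₁ m₂ x m
      = ((m₁ - 1 : ℕ) : ℝ) * B + ∑ m ∈ Ico m₁ m₂, x m + ((M + 1 - m₂ : ℕ) : ℝ) * K := by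
  have hB : ∀ m ∈ Ico 1 m₁, threePart B K m₁ m₂ x m = B := fun m hm ↦ by
    simp only [threePart, if_pos (mem_Ico.1 hm).2]
  have hx : ∀ m ∈ Ico m₁ m₂, threePart B K m₁ m₂ x m = x m := fun m hm ↦ by
    have := mem_Ico.1 hm
    simp only [threePart, if_neg (not_lt.2 this.1), if_pos this.2]
  have hK : ∀ m ∈ Ico m₂ (M + 1), threePart B K m₁ m₂ x m = K := fun m hm ↦ by
    have := mem_Ico.1 hm
    simp only [threePart, if_neg (not_lt.2 (hm₁₂.trans this.1)), if_neg (not_lt.2 this.1)]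
  rw [← Ico_add_one_right_eq_Icc, ← sum_Ico_consecutive _ hm₁ (hm₁₂.trans hm₂),
    ← sum_Ico_consecutive _ hm₁₂ hm₂, sum_Ico_eq_mul_of_forall_eq hB, sum_congr rfl hx,
    sum_Ico_eq_mul_of_forall_eq hK, add_assoc]

lemma mul_sub_threePart_nonpos (hx : AntitoneOn x (Set.Icc 1 M)) (hm₁ : 1 ≤ m₁)
    (hm₁₂ : m₁ ≤ m₂) (hm₂ : m₂ ≤ M + 1) (hB : m₁ = 1 ∨ B ≤ x (m₁ - 1)) (hK : m₂ = M + 1 ∨ x m₂ ≤ K) {r : ℝ} (hr : r ∈ Set.Icc K B)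
    {m : ℕ} (hm : m ∈ Set.Icc 1 M) :
    (x m - threePart B K m₁ m₂ x m) * (r - threePart B K m₁ m₂ x m) ≤ 0 := by
  obtain ⟨hm1, hmM⟩ := hm
  unfold threePart
  split_ifs with h₁ h₂
  · refine mul_nonpos_of_nonneg_of_nonpos ?_ (by linarith [hr.2])
    rcases hB with rfl | hB
    · omega
    · linarith [hx ⟨hm1, hmM⟩ ⟨by omega, by omega⟩ (by omega : m ≤ m₁ - 1)]
  · simp
  · refine mul_nonpos_of_nonpos_of_nonneg ?_ (by linarith [hr.1])
    rcases hK with rfl | hK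
    · omega
    · linarith [hx ⟨by omega, by omega⟩ ⟨hm1, hmM⟩ (not_lt.1 h₂)]

end threePart

theorem three_part_waterfilling_optimal_general (M : ℕ)
    (p : ℕ → ℝ) (hp : ∀ m, 1 ≤ m → m ≤ M → 0 < p m)
    (hdec : ∀ i j, 1 ≤ i → i < j → j ≤ M → p j < p i)
    (K B S : ℝ) (hK : 0 < K) (hKB : K < B)
    (m₁ m₂ : ℕ) (hm₁l : 1 ≤ m₁) (hm₁₂ : m₁ < m₂) (hm₂u : m₂ ≤ M + 1)
    (S' t : ℝ)
    (hS'def : S' = S - ((m₁ - 1 : ℕ) : ℝ) * B - ((M + 1 - m₂ : ℕ) : ℝ) * K)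
    (htdef : t = S' / ∑ j ∈ Finset.Icc m₁ (m₂ - 1), Real.sqrt (p j))
    (hcap₁ : t * Real.sqrt (p m₁) ≤ B)
    (hlow₁ : m₁ = 1 ∨ B ≤ t * Real.sqrt (p (m₁ - 1)))
    (hcap₂ : K ≤ t * Real.sqrt (p (m₂ - 1)))
    (hlow₂ : m₂ = M + 1 ∨ t * Real.sqrt (p m₂) ≤ K)
    (rhat : ℕ → ℝ)
    (hrhat : ∀ m, 1 ≤ m → m ≤ M →
      rhat m = if m < m₁ then B else if m < m₂ then t * Real.sqrt (p m) else K) :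
    ((∀ m, 1 ≤ m → m ≤ M → K ≤ rhat m ∧ rhat m ≤ B) ∧
      ∑ m ∈ Finset.Icc 1 M, rhat m ≤ S) ∧
    ∀ r : ℕ → ℝ, (∀ m, 1 ≤ m → m ≤ M → K ≤ r m ∧ r m ≤ B) →
      ∑ m ∈ Finset.Icc 1 M, r m ≤ S →
      ∑ m ∈ Finset.Icc 1 M, p m / rhat m ≤ ∑ m ∈ Finset.Icc 1 M, p m / r m := by
  set x : ℕ → ℝ := fun m ↦ t * √(p m)
  have ht : 0 < t := pos_of_mul_pos_left (hK.trans_le hcap₂) (Real.sqrt_nonneg _)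
  have hx : AntitoneOn x (Set.Icc 1 M) := fun i hi j hj hij ↦
    mul_le_mul_of_nonneg_left (Real.sqrt_le_sqrt <| (StrictAntiOn.antitoneOn
      fun i hi j hj hij ↦ hdec i j hi.1 hij hj.2) hi hj hij) ht.le
  have hrhat' : ∀ m ∈ Icc 1 M, rhat m = threePart B K m₁ m₂ x m := fun m hm ↦
    hrhat m (mem_Icc.1 hm).1 (mem_Icc.1 hm).2
  have hbounds (m) (hm : m ∈ Icc 1 M) : rhat m ∈ Set.Icc K B := hrhat' m hm ▸
    threePart_mem_Icc hx hKB.le hm₁l hm₂u hcap₁ hcap₂ (by simpa using hm)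
  have hsum : ∑ m ∈ Icc 1 M, rhat m = S := by
    have hS' : ∑ m ∈ Ico m₁ m₂, x m = S' := by
      rw [← mul_sum, ← Icc_sub_one_right_eq_Ico_of_not_isMin (by simp; omega), htdef,
        div_mul_cancel₀]
      rintro hzero -- `t > 0` rules out the junk value `S' / 0 = 0`
      simp [htdef, hzero] at ht
    rw [sum_congr rfl hrhat', sum_Icc_threePart hm₁l hm₁₂.le hm₂u, hS', hS'def]
    ring
  refine ⟨⟨fun m h1 h2 ↦ hbounds m (mem_Icc.2 ⟨h1, h2⟩), hsum.le⟩, fun r hr hrS ↦ ?_⟩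
  refine sum_le_sum_of_le_add_mul_sub (inv_nonneg.2 (sq_nonneg t)) (fun m hm ↦ ?_) (hsum ▸ hrS)
  obtain ⟨h1, h2⟩ := mem_Icc.1 hm
  refine div_le_div_add_inv_sq_mul_sub (hp m h1 h2).le ht (hK.trans_le (hbounds m hm).1)
    (hK.trans_le (hr m h1 h2).1) ?_
  rw [hrhat' m hm]
  exact mul_sub_threePart_nonpos hx hm₁l hm₁₂.le hm₂u hlow₁ hlow₂ (hr m h1 h2) ⟨h1, h2⟩

/-- Proposition 2 (exact form): the three-part (doubly clamped water-filling)
allocation `r̂_m = B` for `m < m₁`, `r̂_m = t √p_m` for `m₁ ≤ m < m₂`, and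
`r̂_m = K` for `m ≥ m₂` is feasible and minimizes `∑ p_m / r_m` over
`{K ≤ r_m ≤ B, ∑ r_m ≤ S}`. -/
theorem three_part_waterfilling_optimal (M : ℕ) (hM : 1 ≤ M)
    (p : ℕ → ℝ) (hp : ∀ m, 1 ≤ m → m ≤ M → 0 < p m)
    (hdec : ∀ i j, 1 ≤ i → i < j → j ≤ M → p j < p i)
    (K B S : ℝ) (hK : 0 < K) (hKB : K < B)
    (hMKS : M * K ≤ S) (hSMB : S ≤ M * B)
    (m₁ m₂ : ℕ) (hm₁l : 1 ≤ m₁) (hm₁₂ : m₁ < m₂) (hm₂u : m₂ ≤ M + 1)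
    (S' t : ℝ)
    (hS'def : S' = S - ((m₁ - 1 : ℕ) : ℝ) * B - ((M + 1 - m₂ : ℕ) : ℝ) * K)
    (htdef : t = S' / ∑ j ∈ Finset.Icc m₁ (m₂ - 1), Real.sqrt (p j))
    (hS'pos : 0 < S')
    (hcap₁ : t * Real.sqrt (p m₁) ≤ B)
    (hlow₁ : m₁ = 1 ∨ B ≤ t * Real.sqrt (p (m₁ - 1)))
    (hcap₂ : K ≤ t * Real.sqrt (p (m₂ - 1)))
    (hlow₂ : m₂ = M + 1 ∨ t * Real.sqrt (p m₂) ≤ K)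
    (rhat : ℕ → ℝ)
    (hrhat : ∀ m, 1 ≤ m → m ≤ M →
      rhat m = if m < m₁ then B else if m < m₂ then t * Real.sqrt (p m) else K) :
    ((∀ m, 1 ≤ m → m ≤ M → K ≤ rhat m ∧ rhat m ≤ B) ∧
      ∑ m ∈ Finset.Icc 1 M, rhat m ≤ S) ∧
    ∀ r : ℕ → ℝ, (∀ m, 1 ≤ m → m ≤ M → K ≤ r m ∧ r m ≤ B) →
      ∑ m ∈ Finset.Icc 1 M, r m ≤ S →
      ∑ m ∈ Finset.Icc 1 M, p m / rhat m ≤ ∑ m ∈ Finset.Icc 1 M, p m / r m :=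
  three_part_waterfilling_optimal_general M p hp hdec K B S hK hKB m₁ m₂ hm₁l hm₁₂ hm₂u S' t hS'def
    htdef hcap₁ hlow₁ hcap₂ hlow₂ rhat hrhat
end

section
/- Under the hypotheses of the preceding clamped water-filling optimality statement (p strictly decreasing positive, 0 < K < B, MK ≤ S ≤ MB, indices m₁ < m₂ with S′ = S − (m₁−1)B − (M−m₂+1)K > 0, t = S′/∑_{j=m₁}^{m₂−1}√p_j satisfying t√p_{m₁} ≤ B, m₁ = 1 or t√p_{m₁−1} ≥ B, t√p_{m₂−1} ≥ K, and m₂ = M+1 or t√p_{m₂} ≤ K), the minimum value of ∑_{m=1}^M p_m/r_m over { r : K ≤ r_m ≤ B, ∑_m r_m ≤ S } equals (1/B)·∑_{m=1}^{m₁−1} p_m + (∑_{m=m₁}^{m₂−1} √p_m)² / S′ + (1/K)·∑_{m=m₂}^{M} p_m. -/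
/-!
Let `t = S' / ∑_{m₁ ≤ j < m₂} √p_j` and let `r̂_m` be `t √p_m` clamped to `[K, B]`. Since `p` is
decreasing, the threshold conditions say exactly that `r̂ = B` before `m₁`, `r̂ = t √p_m` on
`[m₁, m₂)` and `r̂ = K` from `m₂` on, so `r̂` spends the whole budget `S`.

Optimality is weak Lagrangian duality with multiplier `1 / t²`: on `[K, B]` the convex function
`r ↦ p_m / r + r / t²` is minimised at the clamp of its free minimiser `t √p_m`, i.e. at `r̂_m`.
Summing over `m` gives `∑ p_m / r̂_m + S / t² ≤ ∑ p_m / r_m + ∑ r_m / t²` for every feasible `r`.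
On the middle block `∑ p_m / r̂_m = ∑ √p_m / t = (∑ √p_m)² / S'`.
-/

open Finset

theorem Finset.sum_Icc_eq_add_add {β : Type*} [AddCommMonoid β] (f : ℕ → β) {a b c d : ℕ}
    (hb : 0 < b) (hab : a ≤ b) (hbc : b ≤ c) (hcd : c ≤ d + 1) :
    ∑ i ∈ Icc a d, f i =
      ∑ i ∈ Icc a (b - 1), f i + ∑ i ∈ Icc b (c - 1), f i + ∑ i ∈ Icc c d, f i := by
  have hpred : ∀ {n} (x : ℕ), 0 < n → Icc x (n - 1) = Ico x n := fun x hn =>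
    Icc_sub_one_right_eq_Ico_of_not_isMin (by simpa using hn.ne') x
  rw [hpred a hb, hpred b (hb.trans_le hbc), ← Ico_add_one_right_eq_Icc,
    ← Ico_add_one_right_eq_Icc, sum_Ico_consecutive f hab hbc,
    sum_Ico_consecutive f (hab.trans hbc) hcd]

theorem sq_div_max_min_add_le {a K B x : ℝ} (ha : 0 ≤ a) (hK : 0 < K) (hKB : K ≤ B)
    (hx : x ∈ Set.Icc K B) :
    a ^ 2 / max K (min a B) + max K (min a B) ≤ a ^ 2 / x + x := by
  set y := max K (min a B)
  have hx0 : 0 < x := hK.trans_le hx.1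
  have hy0 : 0 < y := hK.trans_le (le_max_left _ _)
  have hdiff : a ^ 2 / x + x - (a ^ 2 / y + y) = (x - y) * (x * y - a ^ 2) / (x * y) := by
    field_simp
    ring
  have hnum : 0 ≤ (x - y) * (x * y - a ^ 2) := by
    rcases le_total a K with haK | hKa
    · have hy : y = K := by simp [y, min_eq_left (haK.trans hKB), haK]
      rw [hy]
      exact mul_nonneg (sub_nonneg.2 hx.1) (by nlinarith [hx.1, mul_le_mul haK haK ha hK.le])
    rcases le_total a B with haB | hBa
    · have hy : y = a := by simp [y, haB, hKa]
      rw [hy]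
      nlinarith [sq_nonneg (x - a)]
    · have hy : y = B := by simp [y, hBa, hKB]
      rw [hy]
      exact mul_nonneg_of_nonpos_of_nonpos (sub_nonpos.2 hx.2)
        (by nlinarith [hx.2, mul_le_mul hBa hBa (hK.le.trans hKB) ha])
  linarith [div_nonneg hnum (mul_pos hx0 hy0).le]

noncomputable def clampedAllocation {ι : Type*} (K B t : ℝ) (p : ι → ℝ) (i : ι) : ℝ :=
  max K (min (t * √(p i)) B)

section clampedAllocation

variable {ι : Type*} {K B t : ℝ} {p : ι → ℝ}

theorem clampedAllocation_of_right_le {i : ι} (hKB : K ≤ B) (h : B ≤ t * √(p i)) :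
    clampedAllocation K B t p i = B := by
  simp [clampedAllocation, h, hKB]

theorem clampedAllocation_of_mem {i : ι} (h : t * √(p i) ∈ Set.Icc K B) :
    clampedAllocation K B t p i = t * √(p i) := by
  simp [clampedAllocation, h.1, h.2]

theorem clampedAllocation_of_le_left {i : ι} (hKB : K ≤ B) (h : t * √(p i) ≤ K) :
    clampedAllocation K B t p i = K := by
  simp [clampedAllocation, h, h.trans hKB]

theorem isLeast_sum_div_clampedAllocation (s : Finset ι) (hp : ∀ i ∈ s, 0 ≤ p i)
    (hK : 0 < K) (hKB : K ≤ B) (ht : 0 < t) :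
    IsLeast {y | ∃ r : ι → ℝ, (∀ i ∈ s, K ≤ r i ∧ r i ≤ B) ∧
        ∑ i ∈ s, r i ≤ ∑ i ∈ s, clampedAllocation K B t p i ∧ y = ∑ i ∈ s, p i / r i}
      (∑ i ∈ s, p i / clampedAllocation K B t p i) := by
  set R := clampedAllocation K B t p
  refine ⟨⟨R, fun i _ => ⟨le_max_left _ _, max_le hKB (min_le_right _ _)⟩, le_rfl, rfl⟩, ?_⟩
  rintro _ ⟨r, hr, hsum, rfl⟩
  have hcoord : ∀ i ∈ s, p i / R i + R i / t ^ 2 ≤ p i / r i + r i / t ^ 2 := by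
    intro i hi
    have hmin := sq_div_max_min_add_le (mul_nonneg ht.le (Real.sqrt_nonneg (p i))) hK hKB (hr i hi)
    rw [mul_pow, Real.sq_sqrt (hp i hi)] at hmin
    have hscale : ∀ z, p i / z + z / t ^ 2 = (t ^ 2 * p i / z + z) / t ^ 2 := by
      intro z
      field_simp
    rw [hscale, hscale]
    exact div_le_div_of_nonneg_right hmin (sq_nonneg t)
  have hlag := sum_le_sum hcoord
  rw [sum_add_distrib, sum_add_distrib, ← sum_div, ← sum_div] at hlag
  linarith [div_le_div_of_nonneg_right hsum (sq_nonneg t)]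

end clampedAllocation

section ThreeBlocks

variable {M m₁ m₂ : ℕ} {p : ℕ → ℝ} {K B t : ℝ}

theorem clampedAllocation_eq_upper_on_Icc (hanti : AntitoneOn (fun m => t * √(p m)) (Set.Icc 1 M))
    (hKB : K ≤ B) (hm₁ : m₁ ≤ M + 1) (hlow₁ : m₁ = 1 ∨ B ≤ t * √(p (m₁ - 1))) :
    ∀ m ∈ Icc 1 (m₁ - 1), clampedAllocation K B t p m = B := fun m hm => by
  rw [mem_Icc] at hm
  refine clampedAllocation_of_right_le hKB ((hlow₁.resolve_left (by omega)).trans ?_)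
  exact hanti ⟨hm.1, by omega⟩ ⟨by omega, by omega⟩ hm.2

theorem clampedAllocation_eq_on_Icc (hanti : AntitoneOn (fun m => t * √(p m)) (Set.Icc 1 M))
    (hm₁ : 1 ≤ m₁) (hm₂ : m₂ ≤ M + 1) (hcap₁ : t * √(p m₁) ≤ B)
    (hcap₂ : K ≤ t * √(p (m₂ - 1))) :
    ∀ m ∈ Icc m₁ (m₂ - 1), clampedAllocation K B t p m = t * √(p m) := fun m hm => by
  rw [mem_Icc] at hm
  exact clampedAllocation_of_mem
    ⟨hcap₂.trans (hanti ⟨by omega, by omega⟩ ⟨by omega, by omega⟩ hm.2),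
      (hanti ⟨hm₁, by omega⟩ ⟨by omega, by omega⟩ hm.1).trans hcap₁⟩

theorem clampedAllocation_eq_lower_on_Icc (hanti : AntitoneOn (fun m => t * √(p m)) (Set.Icc 1 M))
    (hKB : K ≤ B) (hm₂ : 1 ≤ m₂) (hlow₂ : m₂ = M + 1 ∨ t * √(p m₂) ≤ K) :
    ∀ m ∈ Icc m₂ M, clampedAllocation K B t p m = K := fun m hm => by
  rw [mem_Icc] at hm
  refine clampedAllocation_of_le_left hKB ((hanti ⟨hm₂, by omega⟩ ⟨by omega, hm.2⟩ hm.1).trans ?_)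
  exact hlow₂.resolve_left (by omega)

theorem sum_Icc_of_three_blocks {R : ℕ → ℝ} (hm₁ : 1 ≤ m₁) (hm₁₂ : m₁ ≤ m₂) (hm₂ : m₂ ≤ M + 1)
    (hleft : ∀ m ∈ Icc 1 (m₁ - 1), R m = B) (hmid : ∀ m ∈ Icc m₁ (m₂ - 1), R m = t * √(p m))
    (hright : ∀ m ∈ Icc m₂ M, R m = K) :
    ∑ m ∈ Icc 1 M, R m =
      (m₁ - 1 : ℕ) * B + t * ∑ m ∈ Icc m₁ (m₂ - 1), √(p m) + (M + 1 - m₂ : ℕ) * K := by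
  rw [sum_Icc_eq_add_add R hm₁ hm₁ hm₁₂ hm₂, sum_congr rfl hleft, sum_congr rfl hmid,
    sum_congr rfl hright, sum_const, sum_const, ← mul_sum, Nat.card_Icc, Nat.card_Icc,
    nsmul_eq_mul, nsmul_eq_mul, Nat.add_sub_cancel]

theorem sum_Icc_div_of_three_blocks {R : ℕ → ℝ} (hm₁ : 1 ≤ m₁) (hm₁₂ : m₁ ≤ m₂)
    (hm₂ : m₂ ≤ M + 1) (hleft : ∀ m ∈ Icc 1 (m₁ - 1), R m = B)
    (hmid : ∀ m ∈ Icc m₁ (m₂ - 1), R m = t * √(p m)) (hright : ∀ m ∈ Icc m₂ M, R m = K) :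
    ∑ m ∈ Icc 1 M, p m / R m = (1 / B) * ∑ m ∈ Icc 1 (m₁ - 1), p m +
      (∑ m ∈ Icc m₁ (m₂ - 1), √(p m)) / t + (1 / K) * ∑ m ∈ Icc m₂ M, p m := by
  rw [sum_Icc_eq_add_add _ hm₁ hm₁ hm₁₂ hm₂, mul_sum, mul_sum, sum_div]
  congr 1
  · congr 1
    · exact sum_congr rfl fun m hm => by rw [hleft m hm, one_div_mul_eq_div]
    · exact sum_congr rfl fun m hm => by rw [hmid m hm, mul_comm, ← div_div, Real.div_sqrt]
  · exact sum_congr rfl fun m hm => by rw [hright m hm, one_div_mul_eq_div]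

end ThreeBlocks

theorem three_part_waterfilling_min_value_general (M : ℕ)
    (p : ℕ → ℝ) (hp : ∀ m, 1 ≤ m → m ≤ M → 0 < p m)
    (hdec : ∀ i j, 1 ≤ i → i < j → j ≤ M → p j < p i)
    (K B S : ℝ) (hK : 0 < K) (hKB : K < B)
    (m₁ m₂ : ℕ) (hm₁l : 1 ≤ m₁) (hm₁₂ : m₁ < m₂) (hm₂u : m₂ ≤ M + 1)
    (S' t : ℝ)
    (hS'def : S' = S - ((m₁ - 1 : ℕ) : ℝ) * B - ((M + 1 - m₂ : ℕ) : ℝ) * K)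
    (htdef : t = S' / ∑ j ∈ Finset.Icc m₁ (m₂ - 1), Real.sqrt (p j))
    (hS'pos : 0 < S')
    (hcap₁ : t * Real.sqrt (p m₁) ≤ B)
    (hlow₁ : m₁ = 1 ∨ B ≤ t * Real.sqrt (p (m₁ - 1)))
    (hcap₂ : K ≤ t * Real.sqrt (p (m₂ - 1)))
    (hlow₂ : m₂ = M + 1 ∨ t * Real.sqrt (p m₂) ≤ K) :
    IsLeast { y : ℝ | ∃ r : ℕ → ℝ, (∀ m, 1 ≤ m → m ≤ M → K ≤ r m ∧ r m ≤ B) ∧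
        ∑ m ∈ Finset.Icc 1 M, r m ≤ S ∧ y = ∑ m ∈ Finset.Icc 1 M, p m / r m }
      ((1 / B) * ∑ m ∈ Finset.Icc 1 (m₁ - 1), p m +
        (∑ m ∈ Finset.Icc m₁ (m₂ - 1), Real.sqrt (p m)) ^ 2 / S' +
        (1 / K) * ∑ m ∈ Finset.Icc m₂ M, p m) := by
  set Q := ∑ j ∈ Icc m₁ (m₂ - 1), √(p j)
  have hQ : 0 < Q := sum_pos (fun j hj => Real.sqrt_pos.2 (hp j (by grind) (by grind)))
    ⟨m₁, mem_Icc.2 ⟨le_rfl, by omega⟩⟩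
  have ht : 0 < t := htdef ▸ div_pos hS'pos hQ
  have hpanti : StrictAntiOn p (Set.Icc 1 M) := fun i hi j hj hij => hdec i j hi.1 hij hj.2
  have hanti : AntitoneOn (fun m => t * √(p m)) (Set.Icc 1 M) := fun i hi j hj hij =>
    mul_le_mul_of_nonneg_left (Real.sqrt_le_sqrt (hpanti.antitoneOn hi hj hij)) ht.le
  have hleft := clampedAllocation_eq_upper_on_Icc hanti hKB.le (by omega) hlow₁
  have hmid := clampedAllocation_eq_on_Icc (K := K) (B := B) hanti hm₁l hm₂u hcap₁ hcap₂
  have hright := clampedAllocation_eq_lower_on_Icc hanti hKB.le (by omega) hlow₂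
  have hsum : ∑ m ∈ Icc 1 M, clampedAllocation K B t p m = S := by
    rw [sum_Icc_of_three_blocks hm₁l hm₁₂.le hm₂u hleft hmid hright, htdef,
      div_mul_cancel₀ _ hQ.ne', hS'def]
    ring
  have hval := sum_Icc_div_of_three_blocks hm₁l hm₁₂.le hm₂u hleft hmid hright
  have hQt : Q / t = Q ^ 2 / S' := by rw [htdef]; field_simp
  have hopt := isLeast_sum_div_clampedAllocation (Icc 1 M)
    (fun m hm => (hp m (mem_Icc.1 hm).1 (mem_Icc.1 hm).2).le) hK hKB.le ht
  rw [hsum, hval, hQt] at hopt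
  simpa only [mem_Icc, and_imp] using hopt

/-- Theorem 3 (exact value, eq. (F.1)): under the KKT threshold conditions, the
minimum of `∑ p_m / r_m` over `{K ≤ r_m ≤ B, ∑ r_m ≤ S}` equals
`(1/B) ∑_{m<m₁} p_m + (∑_{m₁≤m<m₂} √p_m)² / S' + (1/K) ∑_{m≥m₂} p_m`. -/
theorem three_part_waterfilling_min_value (M : ℕ) (hM : 1 ≤ M)
    (p : ℕ → ℝ) (hp : ∀ m, 1 ≤ m → m ≤ M → 0 < p m)
    (hdec : ∀ i j, 1 ≤ i → i < j → j ≤ M → p j < p i)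
    (K B S : ℝ) (hK : 0 < K) (hKB : K < B)
    (hMKS : M * K ≤ S) (hSMB : S ≤ M * B)
    (m₁ m₂ : ℕ) (hm₁l : 1 ≤ m₁) (hm₁₂ : m₁ < m₂) (hm₂u : m₂ ≤ M + 1)
    (S' t : ℝ)
    (hS'def : S' = S - ((m₁ - 1 : ℕ) : ℝ) * B - ((M + 1 - m₂ : ℕ) : ℝ) * K)
    (htdef : t = S' / ∑ j ∈ Finset.Icc m₁ (m₂ - 1), Real.sqrt (p j))
    (hS'pos : 0 < S')
    (hcap₁ : t * Real.sqrt (p m₁) ≤ B)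
    (hlow₁ : m₁ = 1 ∨ B ≤ t * Real.sqrt (p (m₁ - 1)))
    (hcap₂ : K ≤ t * Real.sqrt (p (m₂ - 1)))
    (hlow₂ : m₂ = M + 1 ∨ t * Real.sqrt (p m₂) ≤ K) :
    IsLeast { y : ℝ | ∃ r : ℕ → ℝ, (∀ m, 1 ≤ m → m ≤ M → K ≤ r m ∧ r m ≤ B) ∧
        ∑ m ∈ Finset.Icc 1 M, r m ≤ S ∧ y = ∑ m ∈ Finset.Icc 1 M, p m / r m }
      ((1 / B) * ∑ m ∈ Finset.Icc 1 (m₁ - 1), p m +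
        (∑ m ∈ Finset.Icc m₁ (m₂ - 1), Real.sqrt (p m)) ^ 2 / S' +
        (1 / K) * ∑ m ∈ Finset.Icc m₂ M, p m) :=
  three_part_waterfilling_min_value_general M p hp hdec K B S hK hKB m₁ m₂ hm₁l hm₁₂ hm₂u S' t
    hS'def htdef hS'pos hcap₁ hlow₁ hcap₂ hlow₂
end
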